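/- Let t₀ ∈ ℝ, ν > 0, D ≥ 0, δ ≥ 0, S₀ > 0, R₀ ≥ 0, I₀ > 0. Let τ : [t₀,∞) → [0,∞) be bounded continuous with τ(t) ≤ τ_max (τ_max > 0), let β : [0,∞) → [0,1] be continuous, and set Γ(a) = e^{−(ν+D)a} β(a). Then there exists T ∈ (0, 1/2] such that there is exactly one continuous function x : [t₀, t₀+T] → ℝ satisfying sup_{t} |x(t)| ≤ 2 τ_max S₀ I₀ and the Volterra equation x(t) = τ(t) F(x)(t) [ I₀ Γ(t−t₀) + ∫_{0}^{t−t₀} Γ(a) x(t−a) da ] for all t ∈ [t₀, t₀+T]. -/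

import Mathlib

open MeasureTheory Set Filter Real

set_option maxHeartbeats 2000000

/-- The operator `F` sending a candidate flow of new infections `x` to the corresponding
number of susceptibles. -/
noncomputable def Fop (t₀ ν D δ S₀ R₀ I₀ : ℝ) (x : ℝ → ℝ) (t : ℝ) : ℝ :=
  S₀ - ∫ m in t₀..t,
    (x m - δ * (Real.exp (-δ * (m - t₀)) * R₀ +
      ν * ∫ σ in t₀..m, Real.exp (-δ * (m - σ)) *
        (Real.exp (-(ν + D) * (σ - t₀)) * I₀ +
          ∫ a in (0 : ℝ)..(σ - t₀), Real.exp (-(ν + D) * a) * x (σ - a))))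

/-- `Γ(a) = e^{−(ν+D)a} β(a)`. -/
noncomputable def Gam (ν D : ℝ) (β : ℝ → ℝ) (a : ℝ) : ℝ :=
  Real.exp (-(ν + D) * a) * β a

noncomputable def innI (ν D t₀ : ℝ) (g : ℝ → ℝ) (σ : ℝ) : ℝ :=
  ∫ a in (0 : ℝ)..(σ - t₀), Real.exp (-(ν + D) * a) * g (σ - a)

noncomputable def midI (t₀ ν D δ I₀ : ℝ) (g : ℝ → ℝ) (m : ℝ) : ℝ :=
  ∫ σ in t₀..m, Real.exp (-δ * (m - σ)) *
    (Real.exp (-(ν + D) * (σ - t₀)) * I₀ + innI ν D t₀ g σ)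

noncomputable def HH (t₀ ν D δ R₀ I₀ : ℝ) (g : ℝ → ℝ) (m : ℝ) : ℝ :=
  g m - δ * (Real.exp (-δ * (m - t₀)) * R₀ + ν * midI t₀ ν D δ I₀ g m)

lemma Fop_eq (t₀ ν D δ S₀ R₀ I₀ : ℝ) (g : ℝ → ℝ) (t : ℝ) :
    Fop t₀ ν D δ S₀ R₀ I₀ g t = S₀ - ∫ m in t₀..t, HH t₀ ν D δ R₀ I₀ g m := rfl

noncomputable def convI (ν D t₀ : ℝ) (β' g : ℝ → ℝ) (t : ℝ) : ℝ :=
  ∫ a in (0 : ℝ)..(t - t₀), Gam ν D β' a * g (t - a)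

noncomputable def GG (ν D t₀ I₀ : ℝ) (β' g : ℝ → ℝ) (t : ℝ) : ℝ :=
  I₀ * Gam ν D β' (t - t₀) + convI ν D t₀ β' g t

section cont
variable {ν D t₀ δ I₀ R₀ : ℝ} {g β' : ℝ → ℝ}

lemma innI_cont (hg : Continuous g) : Continuous (innI ν D t₀ g) := by
  apply intervalIntegral.continuous_parametric_intervalIntegral_of_continuous
    (f := fun σ a => Real.exp (-(ν + D) * a) * g (σ - a)) ?_ (by continuity)
  have : Continuous fun p : ℝ × ℝ => Real.exp (-(ν + D) * p.2) * g (p.1 - p.2) := by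
    continuity
  exact this

lemma midI_cont (hg : Continuous g) : Continuous (midI t₀ ν D δ I₀ g) := by
  apply intervalIntegral.continuous_parametric_intervalIntegral_of_continuous
    (f := fun m σ => Real.exp (-δ * (m - σ)) *
      (Real.exp (-(ν + D) * (σ - t₀)) * I₀ + innI ν D t₀ g σ)) ?_ continuous_id
  have h1 := innI_cont (ν := ν) (D := D) (t₀ := t₀) hg
  exact (by fun_prop : Continuous fun p : ℝ × ℝ => Real.exp (-δ * (p.1 - p.2))).mul
    (((by fun_prop : Continuous fun p : ℝ × ℝ =>
      Real.exp (-(ν + D) * (p.2 - t₀)) * I₀)).add (h1.comp continuous_snd))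

lemma HH_cont (hg : Continuous g) : Continuous (HH t₀ ν D δ R₀ I₀ g) := by
  have h1 := midI_cont (ν := ν) (D := D) (t₀ := t₀) (δ := δ) (I₀ := I₀) hg
  unfold HH; continuity

lemma Fop_cont (S₀ : ℝ) (hg : Continuous g) :
    Continuous (Fop t₀ ν D δ S₀ R₀ I₀ g) := by
  have h1 := HH_cont (t₀ := t₀) (ν := ν) (D := D) (δ := δ) (R₀ := R₀) (I₀ := I₀) hg
  have h2 : Continuous fun t => ∫ m in t₀..t, HH t₀ ν D δ R₀ I₀ g m :=
    intervalIntegral.continuous_primitive (fun a b => h1.intervalIntegrable a b) t₀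
  show Continuous fun t => S₀ - ∫ m in t₀..t, HH t₀ ν D δ R₀ I₀ g m
  exact continuous_const.sub h2

lemma convI_cont (hβ : Continuous β') (hg : Continuous g) :
    Continuous (convI ν D t₀ β' g) := by
  apply intervalIntegral.continuous_parametric_intervalIntegral_of_continuous
    (f := fun t a => Gam ν D β' a * g (t - a)) ?_ (by continuity)
  have : Continuous fun p : ℝ × ℝ => Real.exp (-(ν + D) * p.2) * β' p.2 * g (p.1 - p.2) := by
    continuity
  exact this

lemma GG_cont (hβ : Continuous β') (hg : Continuous g) :
    Continuous (GG ν D t₀ I₀ β' g) := by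
  have h1 := convI_cont (ν := ν) (D := D) (t₀ := t₀) hβ hg
  unfold GG Gam; continuity

end cont

section congr
variable {ν D t₀ δ I₀ R₀ b : ℝ} {u v : ℝ → ℝ}

lemma innI_congr (h : EqOn u v (Icc t₀ b)) {σ : ℝ} (hσ : σ ∈ Icc t₀ b) :
    innI ν D t₀ u σ = innI ν D t₀ v σ := by
  apply intervalIntegral.integral_congr
  intro a ha
  rw [uIcc_of_le (by linarith [hσ.1] : (0:ℝ) ≤ σ - t₀)] at ha
  have : σ - a ∈ Icc t₀ b := ⟨by linarith [ha.2], by linarith [ha.1, hσ.2]⟩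
  simp only [h this]

lemma midI_congr (h : EqOn u v (Icc t₀ b)) {m : ℝ} (hm : m ∈ Icc t₀ b) :
    midI t₀ ν D δ I₀ u m = midI t₀ ν D δ I₀ v m := by
  apply intervalIntegral.integral_congr
  intro σ hσ
  rw [uIcc_of_le hm.1] at hσ
  simp only [innI_congr h ⟨hσ.1, hσ.2.trans hm.2⟩]

lemma HH_congr (h : EqOn u v (Icc t₀ b)) {m : ℝ} (hm : m ∈ Icc t₀ b) :
    HH t₀ ν D δ R₀ I₀ u m = HH t₀ ν D δ R₀ I₀ v m := by
  unfold HH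
  rw [h hm, midI_congr h hm]

lemma Fop_congr (S₀ : ℝ) (h : EqOn u v (Icc t₀ b)) {t : ℝ} (ht : t ∈ Icc t₀ b) :
    Fop t₀ ν D δ S₀ R₀ I₀ u t = Fop t₀ ν D δ S₀ R₀ I₀ v t := by
  rw [Fop_eq, Fop_eq]
  congr 1
  apply intervalIntegral.integral_congr
  intro m hm
  rw [uIcc_of_le ht.1] at hm
  exact HH_congr h ⟨hm.1, hm.2.trans ht.2⟩

lemma convI_congr {β' : ℝ → ℝ} (h : EqOn u v (Icc t₀ b)) {t : ℝ} (ht : t ∈ Icc t₀ b) :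
    convI ν D t₀ β' u t = convI ν D t₀ β' v t := by
  apply intervalIntegral.integral_congr
  intro a ha
  rw [uIcc_of_le (by linarith [ht.1] : (0:ℝ) ≤ t - t₀)] at ha
  have : t - a ∈ Icc t₀ b := ⟨by linarith [ha.2], by linarith [ha.1, ht.2]⟩
  simp only [h this]

lemma convI_beta {β₁ β₂ : ℝ → ℝ} (h : EqOn β₁ β₂ (Ici 0)) {t : ℝ} (ht : t₀ ≤ t) (g : ℝ → ℝ) :
    convI ν D t₀ β₁ g t = convI ν D t₀ β₂ g t := by
  apply intervalIntegral.integral_congr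
  intro a ha
  rw [uIcc_of_le (by linarith : (0:ℝ) ≤ t - t₀)] at ha
  simp only [Gam, h ha.1]

end congr

lemma abs_intervalIntegral_le {f : ℝ → ℝ} {a b C B : ℝ} (hab : a ≤ b) (hba : b - a ≤ B)
    (h : ∀ x ∈ Ioc a b, |f x| ≤ C) (hC : 0 ≤ C) :
    |∫ x in a..b, f x| ≤ C * B := by
  have key := intervalIntegral.norm_integral_le_of_norm_le_const
    (C := C) (f := f) (a := a) (b := b) ?_
  · rw [Real.norm_eq_abs] at key
    refine key.trans ?_
    rw [abs_of_nonneg (by linarith)]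
    nlinarith
  · intro x hx
    rw [uIoc_of_le hab] at hx
    rw [Real.norm_eq_abs]
    exact h x hx

section bounds
variable {ν D t₀ δ I₀ R₀ T M' : ℝ} {g : ℝ → ℝ}

lemma innI_bound (hνD : 0 ≤ ν + D) (hM' : 0 ≤ M') (hg : ∀ t, |g t| ≤ M')
    {σ : ℝ} (hσ : σ ∈ Icc t₀ (t₀ + T)) : |innI ν D t₀ g σ| ≤ M' * T := by
  apply abs_intervalIntegral_le (by linarith [hσ.1]) (by linarith [hσ.2]) ?_ hM'
  intro a ha
  have h1 : Real.exp (-(ν + D) * a) ≤ 1 := by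
    rw [Real.exp_le_one_iff]
    nlinarith [ha.1]
  have h2 := hg (σ - a)
  rw [abs_mul, abs_of_nonneg (Real.exp_pos _).le]
  nlinarith [Real.exp_pos (-(ν + D) * a), abs_nonneg (g (σ - a))]

lemma midI_bound (hνD : 0 ≤ ν + D) (hδ : 0 ≤ δ) (hI₀ : 0 ≤ I₀) (hT : 0 ≤ T)
    (hM' : 0 ≤ M') (hg : ∀ t, |g t| ≤ M')
    {m : ℝ} (hm : m ∈ Icc t₀ (t₀ + T)) :
    |midI t₀ ν D δ I₀ g m| ≤ (I₀ + M' * T) * T := by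
  apply abs_intervalIntegral_le hm.1 (by linarith [hm.2]) ?_ (by nlinarith)
  intro σ hσ
  have e1 : Real.exp (-δ * (m - σ)) ≤ 1 := by
    rw [Real.exp_le_one_iff]; nlinarith [hσ.2]
  have e2 : Real.exp (-(ν + D) * (σ - t₀)) ≤ 1 := by
    rw [Real.exp_le_one_iff]; nlinarith [hσ.1.le]
  have e3 : |innI ν D t₀ g σ| ≤ M' * T :=
    innI_bound hνD hM' hg ⟨hσ.1.le, hσ.2.trans hm.2⟩
  have h4 := abs_add_le (Real.exp (-(ν + D) * (σ - t₀)) * I₀) (innI ν D t₀ g σ)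
  have h5 : |Real.exp (-(ν + D) * (σ - t₀)) * I₀| = Real.exp (-(ν + D) * (σ - t₀)) * I₀ :=
    abs_of_nonneg (by positivity)
  rw [abs_mul, abs_of_nonneg (Real.exp_pos _).le]
  nlinarith [Real.exp_pos (-δ * (m - σ)), Real.exp_pos (-(ν + D) * (σ - t₀)),
    abs_nonneg (Real.exp (-(ν + D) * (σ - t₀)) * I₀ + innI ν D t₀ g σ)]

lemma HH_bound (hνD : 0 ≤ ν + D) (hν : 0 ≤ ν) (hδ : 0 ≤ δ) (hI₀ : 0 ≤ I₀) (hR₀ : 0 ≤ R₀)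
    (hT : 0 ≤ T) (hM' : 0 ≤ M') (hg : ∀ t, |g t| ≤ M')
    {m : ℝ} (hm : m ∈ Icc t₀ (t₀ + T)) :
    |HH t₀ ν D δ R₀ I₀ g m| ≤ M' + δ * (R₀ + ν * ((I₀ + M' * T) * T)) := by
  have e1 : Real.exp (-δ * (m - t₀)) ≤ 1 := by
    rw [Real.exp_le_one_iff]; nlinarith [hm.1]
  have e2 := midI_bound hνD hδ hI₀ hT hM' hg hm
  have e3 := hg m
  set X := Real.exp (-δ * (m - t₀)) * R₀ + ν * midI t₀ ν D δ I₀ g m with hX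
  have hP : 0 ≤ (I₀ + M' * T) * T := mul_nonneg (add_nonneg hI₀ (mul_nonneg hM' hT)) hT
  have h6 : |X| ≤ R₀ + ν * ((I₀ + M' * T) * T) := by
    refine (abs_add_le _ _).trans ?_
    rw [abs_mul, abs_mul, abs_of_nonneg (Real.exp_pos _).le, abs_of_nonneg hν,
      abs_of_nonneg hR₀]
    nlinarith [Real.exp_pos (-δ * (m - t₀))]
  calc |HH t₀ ν D δ R₀ I₀ g m| = |g m - δ * X| := rfl
  _ ≤ |g m| + |δ * X| := abs_sub _ _
  _ = |g m| + δ * |X| := by rw [abs_mul, abs_of_nonneg hδ]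
  _ ≤ M' + δ * (R₀ + ν * ((I₀ + M' * T) * T)) := by nlinarith [abs_nonneg X]

end bounds

section bounds2
variable {ν D t₀ δ I₀ R₀ T M' S₀ : ℝ} {g β' : ℝ → ℝ}

lemma Fop_bound (hνD : 0 ≤ ν + D) (hν : 0 ≤ ν) (hδ : 0 ≤ δ) (hI₀ : 0 ≤ I₀) (hR₀ : 0 ≤ R₀)
    (hT : 0 ≤ T) (hM' : 0 ≤ M') (hg : ∀ t, |g t| ≤ M')
    {t : ℝ} (ht : t ∈ Icc t₀ (t₀ + T)) :
    |Fop t₀ ν D δ S₀ R₀ I₀ g t - S₀| ≤ (M' + δ * (R₀ + ν * ((I₀ + M' * T) * T))) * T := by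
  have hP : 0 ≤ (I₀ + M' * T) * T := mul_nonneg (add_nonneg hI₀ (mul_nonneg hM' hT)) hT
  have hFS : Fop t₀ ν D δ S₀ R₀ I₀ g t - S₀ = -(∫ m in t₀..t, HH t₀ ν D δ R₀ I₀ g m) := by
    rw [Fop_eq]; ring
  rw [hFS, abs_neg]
  apply abs_intervalIntegral_le ht.1 (by linarith [ht.2]) ?_
    (add_nonneg hM' (mul_nonneg hδ (add_nonneg hR₀ (mul_nonneg hν hP))))
  intro m hm
  exact HH_bound hνD hν hδ hI₀ hR₀ hT hM' hg ⟨hm.1.le, hm.2.trans ht.2⟩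

lemma Gam_abs_le (hνD : 0 ≤ ν + D) (hβ' : ∀ a, 0 ≤ a → |β' a| ≤ 1) {a : ℝ} (ha : 0 ≤ a) :
    |Gam ν D β' a| ≤ 1 := by
  unfold Gam
  rw [abs_mul, abs_of_nonneg (Real.exp_pos _).le]
  have h1 : Real.exp (-(ν + D) * a) ≤ 1 := by
    rw [Real.exp_le_one_iff]; nlinarith
  nlinarith [Real.exp_pos (-(ν + D) * a), abs_nonneg (β' a), hβ' a ha]

lemma convI_bound (hνD : 0 ≤ ν + D) (hβ' : ∀ a, 0 ≤ a → |β' a| ≤ 1)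
    (hM' : 0 ≤ M') (hg : ∀ t, |g t| ≤ M')
    {t : ℝ} (ht : t ∈ Icc t₀ (t₀ + T)) :
    |convI ν D t₀ β' g t| ≤ M' * T := by
  apply abs_intervalIntegral_le (by linarith [ht.1]) (by linarith [ht.2]) ?_ hM'
  intro a ha
  rw [abs_mul]
  have h1 := Gam_abs_le hνD hβ' ha.1.le
  have h2 := hg (t - a)
  nlinarith [abs_nonneg (Gam ν D β' a), abs_nonneg (g (t - a))]

lemma GG_bound (hνD : 0 ≤ ν + D) (hβ' : ∀ a, 0 ≤ a → |β' a| ≤ 1)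
    (hI₀ : 0 ≤ I₀) (hM' : 0 ≤ M') (hg : ∀ t, |g t| ≤ M')
    {t : ℝ} (ht : t ∈ Icc t₀ (t₀ + T)) :
    |GG ν D t₀ I₀ β' g t| ≤ I₀ + M' * T := by
  refine (abs_add_le _ _).trans ?_
  have h1 := Gam_abs_le (β' := β') hνD hβ' (by linarith [ht.1] : (0:ℝ) ≤ t - t₀)
  have h2 := convI_bound (g := g) hνD hβ' hM' hg ht
  rw [abs_mul, abs_of_nonneg hI₀]
  nlinarith [abs_nonneg (Gam ν D β' (t - t₀))]

end bounds2

section diffs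
variable {ν D t₀ δ I₀ R₀ T d S₀ : ℝ} {u v β' : ℝ → ℝ}

lemma innI_sub_bound (hνD : 0 ≤ ν + D) (hu : Continuous u) (hv : Continuous v)
    (hd : 0 ≤ d) (huv : ∀ t, |u t - v t| ≤ d)
    {σ : ℝ} (hσ : σ ∈ Icc t₀ (t₀ + T)) :
    |innI ν D t₀ u σ - innI ν D t₀ v σ| ≤ d * T := by
  have h1 : IntervalIntegrable (fun a => Real.exp (-(ν + D) * a) * u (σ - a)) volume 0 (σ - t₀) :=
    Continuous.intervalIntegrable (by fun_prop) _ _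
  have h2 : IntervalIntegrable (fun a => Real.exp (-(ν + D) * a) * v (σ - a)) volume 0 (σ - t₀) :=
    Continuous.intervalIntegrable (by fun_prop) _ _
  have key : innI ν D t₀ u σ - innI ν D t₀ v σ
      = ∫ a in (0:ℝ)..(σ - t₀), Real.exp (-(ν + D) * a) * (u (σ - a) - v (σ - a)) := by
    rw [innI, innI, ← intervalIntegral.integral_sub h1 h2]
    congr 1; funext a; ring
  rw [key]
  apply abs_intervalIntegral_le (by linarith [hσ.1]) (by linarith [hσ.2]) ?_ hd
  intro a ha
  have e1 : Real.exp (-(ν + D) * a) ≤ 1 := by rw [Real.exp_le_one_iff]; nlinarith [ha.1]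
  rw [abs_mul, abs_of_nonneg (Real.exp_pos _).le]
  nlinarith [Real.exp_pos (-(ν + D) * a), abs_nonneg (u (σ - a) - v (σ - a)), huv (σ - a)]

lemma midI_sub_bound (hνD : 0 ≤ ν + D) (hδ : 0 ≤ δ) (hT : 0 ≤ T)
    (hu : Continuous u) (hv : Continuous v)
    (hd : 0 ≤ d) (huv : ∀ t, |u t - v t| ≤ d)
    {m : ℝ} (hm : m ∈ Icc t₀ (t₀ + T)) :
    |midI t₀ ν D δ I₀ u m - midI t₀ ν D δ I₀ v m| ≤ d * T * T := by
  have hcu : Continuous fun σ => Real.exp (-δ * (m - σ)) *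
      (Real.exp (-(ν + D) * (σ - t₀)) * I₀ + innI ν D t₀ u σ) :=
    (by fun_prop : Continuous fun σ : ℝ => Real.exp (-δ * (m - σ))).mul
      ((by fun_prop : Continuous fun σ : ℝ =>
        Real.exp (-(ν + D) * (σ - t₀)) * I₀).add (innI_cont hu))
  have hcv : Continuous fun σ => Real.exp (-δ * (m - σ)) *
      (Real.exp (-(ν + D) * (σ - t₀)) * I₀ + innI ν D t₀ v σ) :=
    (by fun_prop : Continuous fun σ : ℝ => Real.exp (-δ * (m - σ))).mul
      ((by fun_prop : Continuous fun σ : ℝ =>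
        Real.exp (-(ν + D) * (σ - t₀)) * I₀).add (innI_cont hv))
  have key : midI t₀ ν D δ I₀ u m - midI t₀ ν D δ I₀ v m
      = ∫ σ in t₀..m, Real.exp (-δ * (m - σ)) * (innI ν D t₀ u σ - innI ν D t₀ v σ) := by
    rw [midI, midI, ← intervalIntegral.integral_sub (hcu.intervalIntegrable _ _)
      (hcv.intervalIntegrable _ _)]
    congr 1; funext σ; ring
  rw [key]
  apply abs_intervalIntegral_le hm.1 (by linarith [hm.2]) ?_ (mul_nonneg hd hT)
  intro σ hσ
  have e1 : Real.exp (-δ * (m - σ)) ≤ 1 := by rw [Real.exp_le_one_iff]; nlinarith [hσ.2]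
  have e2 : |innI ν D t₀ u σ - innI ν D t₀ v σ| ≤ d * T :=
    innI_sub_bound hνD hu hv hd huv ⟨hσ.1.le, hσ.2.trans hm.2⟩
  rw [abs_mul, abs_of_nonneg (Real.exp_pos _).le]
  nlinarith [Real.exp_pos (-δ * (m - σ)), abs_nonneg (innI ν D t₀ u σ - innI ν D t₀ v σ)]

lemma HH_sub_bound (hνD : 0 ≤ ν + D) (hν : 0 ≤ ν) (hδ : 0 ≤ δ) (hT : 0 ≤ T)
    (hu : Continuous u) (hv : Continuous v)
    (hd : 0 ≤ d) (huv : ∀ t, |u t - v t| ≤ d)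
    {m : ℝ} (hm : m ∈ Icc t₀ (t₀ + T)) :
    |HH t₀ ν D δ R₀ I₀ u m - HH t₀ ν D δ R₀ I₀ v m| ≤ d + δ * ν * (d * T * T) := by
  have key : HH t₀ ν D δ R₀ I₀ u m - HH t₀ ν D δ R₀ I₀ v m
      = (u m - v m) - δ * ν * (midI t₀ ν D δ I₀ u m - midI t₀ ν D δ I₀ v m) := by
    simp only [HH]; ring
  have e2 := midI_sub_bound (I₀ := I₀) hνD hδ hT hu hv hd huv hm
  rw [key]
  refine (abs_sub _ _).trans ?_
  rw [abs_mul, abs_of_nonneg (mul_nonneg hδ hν)]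
  nlinarith [huv m, mul_nonneg hδ hν,
    abs_nonneg (midI t₀ ν D δ I₀ u m - midI t₀ ν D δ I₀ v m)]

lemma Fop_sub_bound (hνD : 0 ≤ ν + D) (hν : 0 ≤ ν) (hδ : 0 ≤ δ) (hT : 0 ≤ T)
    (hu : Continuous u) (hv : Continuous v)
    (hd : 0 ≤ d) (huv : ∀ t, |u t - v t| ≤ d)
    {t : ℝ} (ht : t ∈ Icc t₀ (t₀ + T)) :
    |Fop t₀ ν D δ S₀ R₀ I₀ u t - Fop t₀ ν D δ S₀ R₀ I₀ v t|
      ≤ (d + δ * ν * (d * T * T)) * T := by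
  have h1 : IntervalIntegrable (HH t₀ ν D δ R₀ I₀ u) volume t₀ t :=
    (HH_cont hu).intervalIntegrable t₀ t
  have h2 : IntervalIntegrable (HH t₀ ν D δ R₀ I₀ v) volume t₀ t :=
    (HH_cont hv).intervalIntegrable t₀ t
  have key : Fop t₀ ν D δ S₀ R₀ I₀ u t - Fop t₀ ν D δ S₀ R₀ I₀ v t
      = -∫ m in t₀..t, (HH t₀ ν D δ R₀ I₀ u m - HH t₀ ν D δ R₀ I₀ v m) := by
    rw [Fop_eq, Fop_eq, intervalIntegral.integral_sub h1 h2]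
    ring
  rw [key, abs_neg]
  apply abs_intervalIntegral_le ht.1 (by linarith [ht.2]) ?_
    (by nlinarith [mul_nonneg hδ hν, mul_nonneg (mul_nonneg hd hT) hT])
  intro m hm
  exact HH_sub_bound hνD hν hδ hT hu hv hd huv ⟨hm.1.le, hm.2.trans ht.2⟩

lemma convI_sub_bound (hνD : 0 ≤ ν + D) (hβc : Continuous β')
    (hβ' : ∀ a, 0 ≤ a → |β' a| ≤ 1)
    (hu : Continuous u) (hv : Continuous v)
    (hd : 0 ≤ d) (huv : ∀ t, |u t - v t| ≤ d)
    {t : ℝ} (ht : t ∈ Icc t₀ (t₀ + T)) :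
    |convI ν D t₀ β' u t - convI ν D t₀ β' v t| ≤ d * T := by
  have hGam : Continuous (Gam ν D β') := by
    unfold Gam
    exact (by fun_prop : Continuous fun a : ℝ => Real.exp (-(ν + D) * a)).mul hβc
  have h1 : IntervalIntegrable (fun a => Gam ν D β' a * u (t - a)) volume 0 (t - t₀) :=
    (hGam.mul (hu.comp (by fun_prop : Continuous fun a : ℝ => t - a))).intervalIntegrable _ _
  have h2 : IntervalIntegrable (fun a => Gam ν D β' a * v (t - a)) volume 0 (t - t₀) :=
    (hGam.mul (hv.comp (by fun_prop : Continuous fun a : ℝ => t - a))).intervalIntegrable _ _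
  have key : convI ν D t₀ β' u t - convI ν D t₀ β' v t
      = ∫ a in (0:ℝ)..(t - t₀), Gam ν D β' a * (u (t - a) - v (t - a)) := by
    rw [convI, convI, ← intervalIntegral.integral_sub h1 h2]
    congr 1; funext a; ring
  rw [key]
  apply abs_intervalIntegral_le (by linarith [ht.1]) (by linarith [ht.2]) ?_ hd
  intro a ha
  have e1 := Gam_abs_le (β' := β') hνD hβ' ha.1.le
  rw [abs_mul]
  nlinarith [abs_nonneg (Gam ν D β' a), abs_nonneg (u (t - a) - v (t - a)), huv (t - a)]

lemma GG_sub_bound (hνD : 0 ≤ ν + D) (hβc : Continuous β')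
    (hβ' : ∀ a, 0 ≤ a → |β' a| ≤ 1)
    (hu : Continuous u) (hv : Continuous v)
    (hd : 0 ≤ d) (huv : ∀ t, |u t - v t| ≤ d)
    {t : ℝ} (ht : t ∈ Icc t₀ (t₀ + T)) :
    |GG ν D t₀ I₀ β' u t - GG ν D t₀ I₀ β' v t| ≤ d * T := by
  have key : GG ν D t₀ I₀ β' u t - GG ν D t₀ I₀ β' v t
      = convI ν D t₀ β' u t - convI ν D t₀ β' v t := by
    simp only [GG]; ring
  rw [key]
  exact convI_sub_bound hνD hβc hβ' hu hv hd huv ht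

end diffs

/-- there exists `T ∈ (0, 1/2]` such that the single-cohort Volterra equation
`x(t) = τ(t) F(x)(t) [ I₀ Γ(t−t₀) + ∫_0^{t−t₀} Γ(a) x(t−a) da ]` has exactly one continuous
solution `x` on `[t₀, t₀+T]` with `sup |x| ≤ 2 τ_max S₀ I₀` (uniqueness as equality of
functions on `[t₀, t₀+T]`). -/
theorem volterra_single_cohort_existence_uniqueness
    (t₀ ν D δ S₀ R₀ I₀ τmax : ℝ)
    (hν : 0 < ν) (hD : 0 ≤ D) (hδ : 0 ≤ δ)
    (hS₀ : 0 < S₀) (hR₀ : 0 ≤ R₀) (hI₀ : 0 < I₀) (hτmax : 0 < τmax)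
    (τ : ℝ → ℝ) (hτ_cont : ContinuousOn τ (Ici t₀))
    (hτ_nonneg : ∀ t ∈ Ici t₀, 0 ≤ τ t)
    (hτ_bdd : ∀ t ∈ Ici t₀, τ t ≤ τmax)
    (β : ℝ → ℝ) (hβ_cont : ContinuousOn β (Ici 0))
    (hβ_mem : ∀ a, 0 ≤ a → β a ∈ Icc (0 : ℝ) 1) :
    ∃ T : ℝ, 0 < T ∧ T ≤ 1 / 2 ∧
      ∃ x : ℝ → ℝ,
        (ContinuousOn x (Icc t₀ (t₀ + T)) ∧
          (∀ t ∈ Icc t₀ (t₀ + T), |x t| ≤ 2 * τmax * S₀ * I₀) ∧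
          (∀ t ∈ Icc t₀ (t₀ + T),
            x t = τ t * Fop t₀ ν D δ S₀ R₀ I₀ x t *
              (I₀ * Gam ν D β (t - t₀) +
                ∫ a in (0 : ℝ)..(t - t₀), Gam ν D β a * x (t - a)))) ∧
        ∀ y : ℝ → ℝ,
          ContinuousOn y (Icc t₀ (t₀ + T)) →
          (∀ t ∈ Icc t₀ (t₀ + T), |y t| ≤ 2 * τmax * S₀ * I₀) →
          (∀ t ∈ Icc t₀ (t₀ + T),
            y t = τ t * Fop t₀ ν D δ S₀ R₀ I₀ y t *
              (I₀ * Gam ν D β (t - t₀) +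
                ∫ a in (0 : ℝ)..(t - t₀), Gam ν D β a * y (t - a))) →
          EqOn y x (Icc t₀ (t₀ + T)) := by
  have hM : 0 < 2 * τmax * S₀ * I₀ := by positivity
  set M : ℝ := 2 * τmax * S₀ * I₀ with hMdef
  set C₁ : ℝ := M + δ * R₀ + δ * ν * (I₀ + M) with hC₁def
  have hC₁ : 0 < C₁ := by
    have h1 : 0 ≤ δ * R₀ := mul_nonneg hδ hR₀
    have h2 : 0 ≤ δ * ν * (I₀ + M) :=
      mul_nonneg (mul_nonneg hδ hν.le) (by linarith)
    rw [hC₁def]; linarith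
  set C₂ : ℝ := 1 + δ * ν with hC₂def
  have hC₂ : 1 ≤ C₂ := by rw [hC₂def]; nlinarith [mul_nonneg hδ hν.le]
  set L : ℝ := τmax * (C₂ * (I₀ + M) + S₀ + C₁) with hLdef
  have hL : 0 < L := by
    rw [hLdef]
    have : 0 < C₂ * (I₀ + M) := by nlinarith
    positivity
  set T : ℝ := min (min (1/2) (S₀ / (3 * C₁))) (min (I₀ / (3 * M)) (1 / (2 * L))) with hTdef
  have hT0 : 0 < T := by
    apply lt_min (lt_min (by norm_num) (by positivity)) (lt_min (by positivity) (by positivity))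
  have hThalf : T ≤ 1 / 2 := (min_le_left _ _).trans (min_le_left _ _)
  have hTC₁ : T * C₁ ≤ S₀ / 3 := by
    have h1 : T ≤ S₀ / (3 * C₁) := (min_le_left _ _).trans (min_le_right _ _)
    rw [le_div_iff₀ (by positivity)] at h1
    nlinarith
  have hTM : T * M ≤ I₀ / 3 := by
    have h1 : T ≤ I₀ / (3 * M) := (min_le_right _ _).trans (min_le_left _ _)
    rw [le_div_iff₀ (by positivity)] at h1
    nlinarith
  have hTL : T * L ≤ 1 / 2 := by
    have h1 : T ≤ 1 / (2 * L) := (min_le_right _ _).trans (min_le_right _ _)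
    rw [le_div_iff₀ (by positivity)] at h1
    nlinarith
  clear_value M C₁ C₂ L T
  refine ⟨T, hT0, hThalf, ?_⟩
  have hTt : t₀ ≤ t₀ + T := by linarith
  have hνD : 0 ≤ ν + D := by linarith
  -- clamp onto the interval
  set cl : ℝ → ℝ := fun t => max t₀ (min t (t₀ + T)) with hcldef
  have hclcont : Continuous cl := continuous_const.max (continuous_id.min continuous_const)
  have hclmem : ∀ t, cl t ∈ Icc t₀ (t₀ + T) :=
    fun t => ⟨le_max_left _ _, max_le hTt (min_le_right _ _)⟩
  have hclid : ∀ t ∈ Icc t₀ (t₀ + T), cl t = t := by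
    intro t ht
    simp only [hcldef]
    rw [min_eq_left ht.2, max_eq_right ht.1]
  -- extensions of β and τ
  set β' : ℝ → ℝ := fun a => β (max a 0) with hβ'def
  have hβ'c : Continuous β' :=
    hβ_cont.comp_continuous (continuous_id.max continuous_const) (fun a => mem_Ici.mpr (le_max_right _ _))
  have hβ'E : EqOn β' β (Ici 0) := by
    intro a ha
    simp only [hβ'def]
    rw [max_eq_left ha]
  have hβ'abs : ∀ a, 0 ≤ a → |β' a| ≤ 1 := by
    intro a _
    have h1 := hβ_mem (max a 0) (le_max_right _ _)
    rw [abs_le]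
    exact ⟨by linarith [h1.1], h1.2⟩
  set τ' : ℝ → ℝ := fun t => τ (max t t₀) with hτ'def
  have hτ'c : Continuous τ' :=
    hτ_cont.comp_continuous (continuous_id.max continuous_const) (fun t => mem_Ici.mpr (le_max_right _ _))
  have hτ'0 : ∀ t, 0 ≤ τ' t := fun t => hτ_nonneg _ (mem_Ici.mpr (le_max_right _ _))
  have hτ'max : ∀ t, τ' t ≤ τmax := fun t => hτ_bdd _ (mem_Ici.mpr (le_max_right _ _))
  have hτ'eq : ∀ t, t₀ ≤ t → τ' t = τ t := by
    intro t ht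
    simp only [hτ'def]
    rw [max_eq_left ht]
  -- the map
  set Φ₀ : (ℝ → ℝ) → ℝ → ℝ :=
    fun g t => τ' t * Fop t₀ ν D δ S₀ R₀ I₀ g t * GG ν D t₀ I₀ β' g t with hΦ₀def
  -- uniform bound for Fop
  have hFle : ∀ g : ℝ → ℝ, (∀ t, |g t| ≤ M) → ∀ s ∈ Icc t₀ (t₀ + T),
      |Fop t₀ ν D δ S₀ R₀ I₀ g s| ≤ S₀ + C₁ * T := by
    intro g hg s hs
    have hF := Fop_bound (S₀ := S₀) hνD hν.le hδ hI₀.le hR₀ hT0.le hM.le hg hs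
    have h3 : (I₀ + M * T) * T ≤ I₀ + M := by nlinarith
    have h2 : M + δ * (R₀ + ν * ((I₀ + M * T) * T)) ≤ C₁ := by
      have h4 : ν * ((I₀ + M * T) * T) ≤ ν * (I₀ + M) := mul_le_mul_of_nonneg_left h3 hν.le
      have h5 : δ * (R₀ + ν * ((I₀ + M * T) * T)) ≤ δ * (R₀ + ν * (I₀ + M)) :=
        mul_le_mul_of_nonneg_left (by linarith) hδ
      have h6 : δ * (R₀ + ν * (I₀ + M)) = δ * R₀ + δ * ν * (I₀ + M) := by ring
      rw [hC₁def]; linarith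
    have h7 := abs_sub_abs_le_abs_sub (Fop t₀ ν D δ S₀ R₀ I₀ g s) S₀
    rw [abs_of_pos hS₀] at h7
    have h8 : (M + δ * (R₀ + ν * ((I₀ + M * T) * T))) * T ≤ C₁ * T :=
      mul_le_mul_of_nonneg_right h2 hT0.le
    linarith
  -- self-map bound
  have key_bound : ∀ g : ℝ → ℝ, (∀ t, |g t| ≤ M) → ∀ s ∈ Icc t₀ (t₀ + T), |Φ₀ g s| ≤ M := by
    intro g hg s hs
    have hF := hFle g hg s hs
    have hG := GG_bound (g := g) (T := T) hνD hβ'abs hI₀.le hM.le hg hs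
    have habs : |Φ₀ g s| = τ' s * |Fop t₀ ν D δ S₀ R₀ I₀ g s| * |GG ν D t₀ I₀ β' g s| := by
      simp only [hΦ₀def]
      rw [abs_mul, abs_mul, abs_of_nonneg (hτ'0 s)]
    rw [habs]
    have hSC : (0:ℝ) ≤ S₀ + C₁ * T := by nlinarith
    have h1 : τ' s * |Fop t₀ ν D δ S₀ R₀ I₀ g s| * |GG ν D t₀ I₀ β' g s|
        ≤ τmax * (S₀ + C₁ * T) * (I₀ + M * T) := by
      exact mul_le_mul (mul_le_mul (hτ'max s) hF (abs_nonneg _) hτmax.le) hG (abs_nonneg _)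
        (mul_nonneg hτmax.le hSC)
    have e1 : S₀ + C₁ * T ≤ 4/3 * S₀ := by nlinarith
    have e2 : I₀ + M * T ≤ 4/3 * I₀ := by nlinarith
    have e3 : (0:ℝ) ≤ I₀ + M * T := by nlinarith
    have h2 : (S₀ + C₁ * T) * (I₀ + M * T) ≤ (4/3 * S₀) * (4/3 * I₀) :=
      mul_le_mul e1 e2 e3 (by positivity)
    have h9 : τmax * (S₀ + C₁ * T) * (I₀ + M * T) ≤ M := by
      have h10 := mul_le_mul_of_nonneg_left h2 hτmax.le
      have h11 : τmax * (4/3 * S₀ * (4/3 * I₀)) ≤ M := by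
        rw [hMdef]
        nlinarith [mul_pos (mul_pos hτmax hS₀) hI₀]
      nlinarith [h10, h11]
    linarith
  -- contraction bound
  have key_lip : ∀ g₁ g₂ : ℝ → ℝ, Continuous g₁ → Continuous g₂ →
      (∀ t, |g₁ t| ≤ M) → (∀ t, |g₂ t| ≤ M) →
      ∀ d : ℝ, 0 ≤ d → (∀ t, |g₁ t - g₂ t| ≤ d) →
      ∀ s ∈ Icc t₀ (t₀ + T), |Φ₀ g₁ s - Φ₀ g₂ s| ≤ 1 / 2 * d := by
    intro g₁ g₂ hc₁ hc₂ hb₁ hb₂ d hd hdle s hs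
    have hF2 := hFle g₂ hb₂ s hs
    have hFsub := Fop_sub_bound (S₀ := S₀) (R₀ := R₀) (I₀ := I₀)
      hνD hν.le hδ hT0.le hc₁ hc₂ hd hdle hs
    have hGsub := GG_sub_bound (I₀ := I₀) hνD hβ'c hβ'abs hc₁ hc₂ hd hdle hs
    have hG1 := GG_bound (g := g₁) (T := T) hνD hβ'abs hI₀.le hM.le hb₁ hs
    set F₁ := Fop t₀ ν D δ S₀ R₀ I₀ g₁ s with hF₁def
    set F₂ := Fop t₀ ν D δ S₀ R₀ I₀ g₂ s with hF₂def
    set G₁ := GG ν D t₀ I₀ β' g₁ s with hG₁def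
    set G₂ := GG ν D t₀ I₀ β' g₂ s with hG₂def
    have key : Φ₀ g₁ s - Φ₀ g₂ s = τ' s * ((F₁ - F₂) * G₁ + F₂ * (G₁ - G₂)) := by
      simp only [hΦ₀def, hF₁def, hF₂def, hG₁def, hG₂def]; ring
    rw [key, abs_mul, abs_of_nonneg (hτ'0 s)]
    have hdT : (0:ℝ) ≤ d + δ * ν * (d * T * T) :=
      add_nonneg hd (mul_nonneg (mul_nonneg hδ hν.le)
        (mul_nonneg (mul_nonneg hd hT0.le) hT0.le))
    have hA : |(F₁ - F₂) * G₁| ≤ ((d + δ * ν * (d * T * T)) * T) * (I₀ + M * T) := by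
      rw [abs_mul]
      exact mul_le_mul hFsub hG1 (abs_nonneg _) (mul_nonneg hdT hT0.le)
    have hB : |F₂ * (G₁ - G₂)| ≤ (S₀ + C₁ * T) * (d * T) := by
      rw [abs_mul]
      exact mul_le_mul hF2 hGsub (abs_nonneg _) ((abs_nonneg _).trans hF2)
    have hAB : |(F₁ - F₂) * G₁ + F₂ * (G₁ - G₂)|
        ≤ ((d + δ * ν * (d * T * T)) * T) * (I₀ + M * T) + (S₀ + C₁ * T) * (d * T) :=
      (abs_add_le _ _).trans (add_le_add hA hB)
    have t2 : T * T ≤ 1 := by nlinarith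
    have s1 : d + δ * ν * (d * T * T) ≤ C₂ * d := by
      have e1 : δ * ν * (d * T * T) = (δ * ν * d) * (T * T) := by ring
      have h9 : (δ * ν * d) * (T * T) ≤ (δ * ν * d) * 1 :=
        mul_le_mul_of_nonneg_left t2 (mul_nonneg (mul_nonneg hδ hν.le) hd)
      rw [hC₂def]; nlinarith
    have sA : ((d + δ * ν * (d * T * T)) * T) * (I₀ + M * T) ≤ C₂ * d * T * (I₀ + M) := by
      have e2 : I₀ + M * T ≤ I₀ + M := by nlinarith
      have e3 : (0:ℝ) ≤ I₀ + M * T := by nlinarith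
      apply mul_le_mul (mul_le_mul_of_nonneg_right s1 hT0.le) e2 e3
      have : (0:ℝ) ≤ C₂ * d := mul_nonneg (by linarith) hd
      exact mul_nonneg this hT0.le
    have sB : (S₀ + C₁ * T) * (d * T) ≤ (S₀ + C₁) * (d * T) := by
      have e4 : C₁ * T ≤ C₁ := by nlinarith
      exact mul_le_mul_of_nonneg_right (by linarith) (mul_nonneg hd hT0.le)
    have sfin : τmax * (C₂ * d * T * (I₀ + M) + (S₀ + C₁) * (d * T)) = T * L * d := by
      rw [hLdef]; ring
    have s4 : T * L * d ≤ 1 / 2 * d := mul_le_mul_of_nonneg_right hTL hd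
    calc τ' s * |(F₁ - F₂) * G₁ + F₂ * (G₁ - G₂)|
        ≤ τmax * |(F₁ - F₂) * G₁ + F₂ * (G₁ - G₂)| :=
          mul_le_mul_of_nonneg_right (hτ'max s) (abs_nonneg _)
      _ ≤ τmax * (C₂ * d * T * (I₀ + M) + (S₀ + C₁) * (d * T)) :=
          mul_le_mul_of_nonneg_left (by linarith) hτmax.le
      _ = T * L * d := sfin
      _ ≤ 1 / 2 * d := s4
  -- continuity of Φ₀ g for continuous g
  have hΦ₀cont : ∀ g : ℝ → ℝ, Continuous g → Continuous (Φ₀ g) := by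
    intro g hg
    have h1 := Fop_cont (t₀ := t₀) (ν := ν) (D := D) (δ := δ) (R₀ := R₀) (I₀ := I₀) S₀ hg
    have h2 := GG_cont (ν := ν) (D := D) (t₀ := t₀) (I₀ := I₀) hβ'c hg
    simp only [hΦ₀def]
    exact (hτ'c.mul h1).mul h2
  -- the complete metric space: closed ball in bounded continuous functions
  set S : Set (BoundedContinuousFunction ℝ ℝ) := Metric.closedBall 0 M with hSdef
  have hSclosed : IsClosed S := Metric.isClosed_closedBall
  haveI : CompleteSpace ↥S := hSclosed.completeSpace_coe
  haveI : Nonempty ↥S := ⟨⟨0, Metric.mem_closedBall_self hM.le⟩⟩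
  have hmemS : ∀ f : ↥S, ∀ t, |(f : BoundedContinuousFunction ℝ ℝ) t| ≤ M := by
    intro f t
    have h1 : ‖(f : BoundedContinuousFunction ℝ ℝ)‖ ≤ M := by
      have h0 : (f : BoundedContinuousFunction ℝ ℝ) ∈
          Metric.closedBall (0 : BoundedContinuousFunction ℝ ℝ) M := f.2
      rw [Metric.mem_closedBall, dist_zero_right] at h0
      exact h0
    have h2 := BoundedContinuousFunction.norm_coe_le_norm
      (f : BoundedContinuousFunction ℝ ℝ) t
    rw [Real.norm_eq_abs] at h2
    linarith
  -- the contraction map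
  set Φ : ↥S → ↥S := fun f =>
    ⟨BoundedContinuousFunction.ofNormedAddCommGroup
      (fun t => Φ₀ (⇑(f : BoundedContinuousFunction ℝ ℝ)) (cl t))
      ((hΦ₀cont _ (f : BoundedContinuousFunction ℝ ℝ).continuous).comp hclcont) M
      (fun t => by
        rw [Real.norm_eq_abs]
        exact key_bound _ (hmemS f) (cl t) (hclmem t)),
     by
      show _ ∈ Metric.closedBall (0 : BoundedContinuousFunction ℝ ℝ) M
      rw [Metric.mem_closedBall, dist_zero_right]
      exact BoundedContinuousFunction.norm_ofNormedAddCommGroup_le _ hM.le _⟩ with hΦdef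
  have hΦcoe : ∀ (f : ↥S) (t : ℝ),
      ((Φ f : ↥S) : BoundedContinuousFunction ℝ ℝ) t
        = Φ₀ (⇑(f : BoundedContinuousFunction ℝ ℝ)) (cl t) := fun f t => rfl
  have hcontr : ContractingWith (1/2 : NNReal) Φ := by
    constructor
    · rw [← NNReal.coe_lt_coe]
      norm_num
    · apply LipschitzWith.of_dist_le_mul
      intro f g
      have hd0 : (0:ℝ) ≤ dist (f : BoundedContinuousFunction ℝ ℝ)
          (g : BoundedContinuousFunction ℝ ℝ) := dist_nonneg
      have hcoe : ((1/2 : NNReal) : ℝ) = 1/2 := by norm_num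
      rw [Subtype.dist_eq f g, Subtype.dist_eq (Φ f) (Φ g), hcoe]
      rw [BoundedContinuousFunction.dist_le (by positivity)]
      intro t
      rw [hΦcoe f t, hΦcoe g t, Real.dist_eq]
      exact key_lip _ _ (f : BoundedContinuousFunction ℝ ℝ).continuous
        (g : BoundedContinuousFunction ℝ ℝ).continuous (hmemS f) (hmemS g) _ hd0
        (fun u => by
          rw [← Real.dist_eq]
          exact BoundedContinuousFunction.dist_coe_le_dist u) (cl t) (hclmem t)
  -- translation between Φ₀ and the statement's right-hand side
  have hGGeq : ∀ (w : ℝ → ℝ) (t : ℝ), t ∈ Icc t₀ (t₀ + T) →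
      GG ν D t₀ I₀ β' w t = I₀ * Gam ν D β (t - t₀) +
        ∫ a in (0 : ℝ)..(t - t₀), Gam ν D β a * w (t - a) := by
    intro w t ht
    have h0 : (0:ℝ) ≤ t - t₀ := by linarith [ht.1]
    have h1 : Gam ν D β' (t - t₀) = Gam ν D β (t - t₀) := by
      simp only [Gam]
      rw [hβ'E h0]
    calc GG ν D t₀ I₀ β' w t = I₀ * Gam ν D β' (t - t₀) + convI ν D t₀ β' w t := rfl
    _ = I₀ * Gam ν D β (t - t₀) + convI ν D t₀ β w t := by
        rw [h1, convI_beta hβ'E ht.1]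
    _ = _ := rfl
  have hsolve : ∀ (w : ℝ → ℝ), ∀ t ∈ Icc t₀ (t₀ + T),
      Φ₀ w t = τ t * Fop t₀ ν D δ S₀ R₀ I₀ w t *
        (I₀ * Gam ν D β (t - t₀) +
          ∫ a in (0 : ℝ)..(t - t₀), Gam ν D β a * w (t - a)) := by
    intro w t ht
    simp only [hΦ₀def]
    rw [hτ'eq t ht.1, hGGeq w t ht]
  -- the fixed point
  set fp : ↥S := ContractingWith.fixedPoint Φ hcontr with hfpdef
  have hfix : Φ fp = fp := hcontr.fixedPoint_isFixedPt
  set x : ℝ → ℝ := ⇑(fp : BoundedContinuousFunction ℝ ℝ) with hxdef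
  have hxcont : Continuous x := (fp : BoundedContinuousFunction ℝ ℝ).continuous
  have hxbound : ∀ t, |x t| ≤ M := hmemS fp
  have hxfix : ∀ t, x t = Φ₀ x (cl t) := by
    intro t
    rw [hxdef]
    conv_lhs => rw [← hfix]
    exact hΦcoe fp t
  have heqx : ∀ t ∈ Icc t₀ (t₀ + T),
      x t = τ t * Fop t₀ ν D δ S₀ R₀ I₀ x t *
        (I₀ * Gam ν D β (t - t₀) +
          ∫ a in (0 : ℝ)..(t - t₀), Gam ν D β a * x (t - a)) := by
    intro t ht
    rw [hxfix t, hclid t ht]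
    exact hsolve x t ht
  refine ⟨x, ⟨hxcont.continuousOn, fun t _ => hxbound t, heqx⟩, ?_⟩
  -- uniqueness
  intro y hyc hyb heqy
  set yt : ℝ → ℝ := fun t => y (cl t) with hydef
  have hytc : Continuous yt := hyc.comp_continuous hclcont hclmem
  have hytb : ∀ t, |yt t| ≤ M := fun t => hyb (cl t) (hclmem t)
  have hEq : EqOn yt y (Icc t₀ (t₀ + T)) := by
    intro s hs
    simp only [hydef]
    rw [hclid s hs]
  set Y : ↥S := ⟨BoundedContinuousFunction.ofNormedAddCommGroup yt hytc M
      (fun t => by rw [Real.norm_eq_abs]; exact hytb t),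
    by
      show _ ∈ Metric.closedBall (0 : BoundedContinuousFunction ℝ ℝ) M
      rw [Metric.mem_closedBall, dist_zero_right]
      exact BoundedContinuousFunction.norm_ofNormedAddCommGroup_le _ hM.le _⟩ with hYdef
  have hYcoe : ∀ t, ((Y : ↥S) : BoundedContinuousFunction ℝ ℝ) t = yt t := fun t => rfl
  have main : ∀ s ∈ Icc t₀ (t₀ + T), Φ₀ yt s = yt s := by
    intro s hs
    have h1 := hsolve yt s hs
    have h2 : Fop t₀ ν D δ S₀ R₀ I₀ yt s = Fop t₀ ν D δ S₀ R₀ I₀ y s := Fop_congr S₀ hEq hs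
    have h3 : convI ν D t₀ β yt s = convI ν D t₀ β y s := convI_congr hEq hs
    have h3' : (∫ a in (0 : ℝ)..(s - t₀), Gam ν D β a * yt (s - a))
        = ∫ a in (0 : ℝ)..(s - t₀), Gam ν D β a * y (s - a) := h3
    rw [h1, h2, h3', hEq hs]
    exact (heqy s hs).symm
  have hYfix : Φ Y = Y := by
    apply Subtype.ext
    apply BoundedContinuousFunction.ext
    intro t
    rw [hΦcoe Y t, hYcoe t]
    have h5 : yt t = yt (cl t) := by
      simp only [hydef]
      rw [hclid (cl t) (hclmem t)]
    have h4 : ⇑((Y : ↥S) : BoundedContinuousFunction ℝ ℝ) = yt := rfl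
    rw [h4, h5]
    exact main (cl t) (hclmem t)
  have hYeq : Y = fp := hcontr.fixedPoint_unique hYfix
  intro s hs
  calc y s = yt s := (hEq hs).symm
  _ = ((Y : ↥S) : BoundedContinuousFunction ℝ ℝ) s := (hYcoe s).symm
  _ = x s := by rw [hxdef, hYeq]
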